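/- arXiv:2012.04723 — 2 statements merged into one kernel-verified Lean document; each statement's English description precedes it below -/
import Mathlib

section
/- Let B_ext = ⟨V ∪ V_+, F ∪ F_+, E_ext⟩ be a bipartite graph, B its induced bipartite subgraph on (V, F), and B_+ its induced bipartite subgraph on (V_+, F_+). Let M be a perfect matching of B, M_+ a perfect matching of B_+, and M_ext = M ∪ M_+. Then for all vertices x, y ∈ V ∪ F: if x and y are mutually reachable in the oriented graph G(B, M) (i.e., lie in the same strongly connected component), then x and y are mutually reachable in the oriented graph G(B_ext, M_ext). (Every cluster of the causal ordering graph of B is contained in a cluster of the causal ordering graph of B_ext.) -/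
/-- `M` is a perfect matching of the bipartite graph with variable vertices `V`,
equation vertices `F`, and edge set `E` (an edge is a pair `(v, f)` with `v` a
variable vertex and `f` an equation vertex): `M` is a set of edges such that
every vertex of `V ∪ F` is incident to exactly one edge of `M`. -/
def IsPerfectMatching {α : Type*} (V F : Set α) (E M : Set (α × α)) : Prop :=
  M ⊆ E ∧ ∀ x ∈ V ∪ F, ∃! e : α × α, e ∈ M ∧ (e.1 = x ∨ e.2 = x)

/-- The directed edge relation of the oriented graph `G(B, M)`: an edge
`(v − f) ∈ E` is oriented as `f → v` if `(v − f) ∈ M`, and as `v → f` otherwise. -/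
def OStep {α : Type*} (E M : Set (α × α)) (x y : α) : Prop :=
  ((x, y) ∈ E ∧ (x, y) ∉ M) ∨ ((y, x) ∈ E ∧ (y, x) ∈ M)

/-- `y` is reachable from `x` in `G(B, M)`: there is a directed path
(possibly of length zero) from `x` to `y`. -/
def Reach {α : Type*} (E M : Set (α × α)) (x y : α) : Prop :=
  Relation.ReflTransGen (OStep E M) x y

/-! Every arc of `G(B, M)` is an arc of `G(B_ext, M ∪ M₊)`: a matched edge of `B` stays
matched, and an unmatched edge of `B` cannot enter `M₊`, whose edges all start in `V₊`. -/

section Monotonicity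

variable {α : Type*} {E E' M M' : Set (α × α)}

theorem OStep.mono (hE : E ⊆ E') (hM : M ⊆ M') (hM' : ∀ e ∈ E, e ∈ M' → e ∈ M) {x y : α} :
    OStep E M x y → OStep E' M' x y := by
  rintro (⟨hxy, hnot⟩ | ⟨hyx, hmatched⟩)
  · exact Or.inl ⟨hE hxy, fun h => hnot (hM' _ hxy h)⟩
  · exact Or.inr ⟨hE hyx, hM hmatched⟩

theorem Reach.mono (hE : E ⊆ E') (hM : M ⊆ M') (hM' : ∀ e ∈ E, e ∈ M' → e ∈ M) {x y : α} :
    Reach E M x y → Reach E' M' x y :=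
  Relation.ReflTransGen.mono (fun _ _ => OStep.mono hE hM hM') x y

end Monotonicity

theorem mutual_reach_preserved_under_extension_general {α : Type*}
    (V Vp F Fp : Set α)
    (hVVp : Disjoint V Vp)
    (Eext : Set (α × α))
    (M Mp : Set (α × α))
    (hMp : IsPerfectMatching Vp Fp {e ∈ Eext | e.1 ∈ Vp ∧ e.2 ∈ Fp} Mp) :
    ∀ x ∈ V ∪ F, ∀ y ∈ V ∪ F,
      (Reach {e ∈ Eext | e.1 ∈ V ∧ e.2 ∈ F} M x y ∧
       Reach {e ∈ Eext | e.1 ∈ V ∧ e.2 ∈ F} M y x) →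
      (Reach Eext (M ∪ Mp) x y ∧ Reach Eext (M ∪ Mp) y x) := by
  have hsub : {e ∈ Eext | e.1 ∈ V ∧ e.2 ∈ F} ⊆ Eext := fun _ he => he.1
  have hmatched : ∀ e ∈ {e ∈ Eext | e.1 ∈ V ∧ e.2 ∈ F}, e ∈ M ∪ Mp → e ∈ M := by
    rintro e ⟨-, heV, -⟩ (heM | heMp)
    · exact heM
    · exact absurd (hMp.1 heMp).2.1 (hVVp.notMem_of_mem_left heV)
  intro x _ y _ ⟨hxy, hyx⟩
  exact ⟨hxy.mono hsub Set.subset_union_left hmatched,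
    hyx.mono hsub Set.subset_union_left hmatched⟩

/-- Mutual reachability (lying in the same strongly connected component)
in `G(B, M)` between vertices of `V ∪ F` is preserved in `G(B_ext, M ∪ M₊)`; every
cluster of the causal ordering graph of `B` is contained in a cluster of the causal
ordering graph of `B_ext`. -/
theorem mutual_reach_preserved_under_extension {α : Type*}
    (V Vp F Fp : Set α)
    (hVfin : V.Finite) (hVpfin : Vp.Finite) (hFfin : F.Finite) (hFpfin : Fp.Finite)
    (hVVp : Disjoint V Vp) (hFFp : Disjoint F Fp)
    (hVF : Disjoint (V ∪ Vp) (F ∪ Fp))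
    (Eext : Set (α × α))
    (hE : ∀ e ∈ Eext, e.1 ∈ V ∪ Vp ∧ e.2 ∈ F ∪ Fp)
    (M Mp : Set (α × α))
    (hM : IsPerfectMatching V F {e ∈ Eext | e.1 ∈ V ∧ e.2 ∈ F} M)
    (hMp : IsPerfectMatching Vp Fp {e ∈ Eext | e.1 ∈ Vp ∧ e.2 ∈ Fp} Mp) :
    ∀ x ∈ V ∪ F, ∀ y ∈ V ∪ F,
      (Reach {e ∈ Eext | e.1 ∈ V ∧ e.2 ∈ F} M x y ∧
       Reach {e ∈ Eext | e.1 ∈ V ∧ e.2 ∈ F} M y x) →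
      (Reach Eext (M ∪ Mp) x y ∧ Reach Eext (M ∪ Mp) y x) :=
  mutual_reach_preserved_under_extension_general V Vp F Fp hVVp Eext M Mp hMp
end

section
/- Let M and M' be two perfect matchings of a bipartite graph B = ⟨V, F, E⟩. Then for all vertices x, y ∈ V ∪ F: x and y are mutually reachable in the oriented graph G(B, M) if and only if x and y are mutually reachable in the oriented graph G(B, M'). (The segmentation of V ∪ F into strongly connected components of G(B, M) does not depend on the choice of the perfect matching.) -/
/-! The symmetric difference of two perfect matchings splits into alternating cycles, and each such
cycle is a directed cycle of `G(B, M)`. So every edge of `G(B, M')` that is reversed in `G(B, M)`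
can be bypassed along its cycle, and `G(B, M)`, `G(B, M')` have the same reachability relation.
The cycles are the orbits of `v ↦ M-mate (M'-mate v)`, a permutation of the finite set `V`. -/

theorem Set.InjOn.exists_pos_iterate_eq {α : Type*} {s : Set α} {f : α → α} (hs : s.Finite)
    (hmaps : Set.MapsTo f s s) (hinj : Set.InjOn f s) {x : α} (hx : x ∈ s) :
    ∃ n > 0, f^[n] x = x := by
  have := hs.to_subtype
  obtain ⟨n, hn, hper⟩ :=
    Function.mem_periodicPts.mp ((hmaps.restrict_inj.mpr hinj).mem_periodicPts ⟨x, hx⟩)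
  exact ⟨n, hn, by simpa only [hmaps.coe_iterate_restrict] using congrArg Subtype.val hper⟩

section

variable {α : Type*} {V F : Set α} {E M M' : Set (α × α)}

namespace IsPerfectMatching

theorem eq_of_mem_of_mem_left (hE : ∀ e ∈ E, e.1 ∈ V ∧ e.2 ∈ F)
    (hM : IsPerfectMatching V F E M) {v f f' : α} (h : (v, f) ∈ M) (h' : (v, f') ∈ M) :
    f = f' := by
  obtain ⟨_, -, huniq⟩ := hM.2 v (Or.inl (hE _ (hM.1 h)).1)
  exact congrArg Prod.snd ((huniq _ ⟨h, Or.inl rfl⟩).trans (huniq _ ⟨h', Or.inl rfl⟩).symm)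

theorem eq_of_mem_of_mem_right (hE : ∀ e ∈ E, e.1 ∈ V ∧ e.2 ∈ F)
    (hM : IsPerfectMatching V F E M) {v v' f : α} (h : (v, f) ∈ M) (h' : (v', f) ∈ M) :
    v = v' := by
  obtain ⟨_, -, huniq⟩ := hM.2 f (Or.inr (hE _ (hM.1 h)).2)
  exact congrArg Prod.fst ((huniq _ ⟨h, Or.inr rfl⟩).trans (huniq _ ⟨h', Or.inr rfl⟩).symm)

theorem exists_mem_left (hVF : Disjoint V F) (hE : ∀ e ∈ E, e.1 ∈ V ∧ e.2 ∈ F)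
    (hM : IsPerfectMatching V F E M) {v : α} (hv : v ∈ V) : ∃ f, (v, f) ∈ M := by
  obtain ⟨⟨v', f⟩, ⟨he, rfl | rfl⟩, -⟩ := hM.2 v (Or.inl hv)
  · exact ⟨f, he⟩
  · exact (Set.disjoint_left.mp hVF hv (hE _ (hM.1 he)).2).elim

theorem exists_mem_right (hVF : Disjoint V F) (hE : ∀ e ∈ E, e.1 ∈ V ∧ e.2 ∈ F)
    (hM : IsPerfectMatching V F E M) {f : α} (hf : f ∈ F) : ∃ v, (v, f) ∈ M := by
  obtain ⟨⟨v, f'⟩, ⟨he, rfl | rfl⟩, -⟩ := hM.2 f (Or.inr hf)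
  · exact (Set.disjoint_right.mp hVF hf (hE _ (hM.1 he)).1).elim
  · exact ⟨v, he⟩

end IsPerfectMatching

open Classical in
noncomputable def alternatingNext (M M' : Set (α × α)) (v : α) : α :=
  if h : ∃ w f, (v, f) ∈ M' ∧ (w, f) ∈ M then h.choose else v

theorem alternatingNext_eq (hE : ∀ e ∈ E, e.1 ∈ V ∧ e.2 ∈ F)
    (hM : IsPerfectMatching V F E M) (hM' : IsPerfectMatching V F E M') {v w f : α}
    (h' : (v, f) ∈ M') (h : (w, f) ∈ M) : alternatingNext M M' v = w := by
  have hex : ∃ w f, (v, f) ∈ M' ∧ (w, f) ∈ M := ⟨w, f, h', h⟩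
  obtain ⟨g, hg', hg⟩ := hex.choose_spec
  rw [alternatingNext, dif_pos hex]
  obtain rfl := hM'.eq_of_mem_of_mem_left hE hg' h'
  exact hM.eq_of_mem_of_mem_right hE hg h

theorem exists_alternatingNext (hVF : Disjoint V F) (hE : ∀ e ∈ E, e.1 ∈ V ∧ e.2 ∈ F)
    (hM : IsPerfectMatching V F E M) (hM' : IsPerfectMatching V F E M') {v : α} (hv : v ∈ V) :
    ∃ f, (v, f) ∈ M' ∧ (alternatingNext M M' v, f) ∈ M := by
  obtain ⟨f, h'⟩ := hM'.exists_mem_left hVF hE hv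
  obtain ⟨w, h⟩ := hM.exists_mem_right hVF hE (hE _ (hM'.1 h')).2
  exact ⟨f, h', alternatingNext_eq hE hM hM' h' h ▸ h⟩

theorem mapsTo_alternatingNext (hVF : Disjoint V F) (hE : ∀ e ∈ E, e.1 ∈ V ∧ e.2 ∈ F)
    (hM : IsPerfectMatching V F E M) (hM' : IsPerfectMatching V F E M') :
    Set.MapsTo (alternatingNext M M') V V := fun _ hv => by
  obtain ⟨_, -, h⟩ := exists_alternatingNext hVF hE hM hM' hv
  exact (hE _ (hM.1 h)).1

theorem injOn_alternatingNext (hVF : Disjoint V F) (hE : ∀ e ∈ E, e.1 ∈ V ∧ e.2 ∈ F)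
    (hM : IsPerfectMatching V F E M) (hM' : IsPerfectMatching V F E M') :
    Set.InjOn (alternatingNext M M') V := fun _ hv _ hw heq => by
  obtain ⟨f, hv', hvM⟩ := exists_alternatingNext hVF hE hM hM' hv
  obtain ⟨g, hw', hwM⟩ := exists_alternatingNext hVF hE hM hM' hw
  rw [heq] at hvM
  obtain rfl := hM.eq_of_mem_of_mem_left hE hvM hwM
  exact hM'.eq_of_mem_of_mem_right hE hv' hw'

theorem reach_alternatingNext (hVF : Disjoint V F) (hE : ∀ e ∈ E, e.1 ∈ V ∧ e.2 ∈ F)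
    (hM : IsPerfectMatching V F E M) (hM' : IsPerfectMatching V F E M') {v : α} (hv : v ∈ V) :
    Reach E M v (alternatingNext M M' v) := by
  obtain ⟨f, h', h⟩ := exists_alternatingNext hVF hE hM hM' hv
  by_cases hvf : (v, f) ∈ M
  · rw [hM.eq_of_mem_of_mem_right hE h hvf]
    exact .refl
  · exact .head (Or.inl ⟨hM'.1 h', hvf⟩) (.single (Or.inr ⟨hM.1 h, h⟩))

theorem reach_iterate_alternatingNext (hVF : Disjoint V F) (hE : ∀ e ∈ E, e.1 ∈ V ∧ e.2 ∈ F)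
    (hM : IsPerfectMatching V F E M) (hM' : IsPerfectMatching V F E M') {v : α} (hv : v ∈ V)
    (n : ℕ) : Reach E M v ((alternatingNext M M')^[n] v) := by
  induction n with
  | zero => exact .refl
  | succ n ih =>
    rw [Function.iterate_succ_apply']
    exact ih.trans (reach_alternatingNext hVF hE hM hM'
      ((mapsTo_alternatingNext hVF hE hM hM').iterate n hv))

/-- The `M'`-mate `w` of the `M`-mate `f` of `v` precedes `v` on its alternating cycle. -/
theorem reach_of_mem_of_mem (hVfin : V.Finite) (hVF : Disjoint V F)
    (hE : ∀ e ∈ E, e.1 ∈ V ∧ e.2 ∈ F) (hM : IsPerfectMatching V F E M)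
    (hM' : IsPerfectMatching V F E M') {v w f : α} (h : (v, f) ∈ M) (h' : (w, f) ∈ M') :
    Reach E M v w := by
  have hw : w ∈ V := (hE _ (hM'.1 h')).1
  obtain ⟨n, hn, hper⟩ := (injOn_alternatingNext hVF hE hM hM').exists_pos_iterate_eq hVfin
    (mapsTo_alternatingNext hVF hE hM hM') hw
  have hstep : alternatingNext M M' w = v := alternatingNext_eq hE hM hM' h' h
  have hpred : (alternatingNext M M')^[n - 1] v = w := by
    rw [← hstep, ← Function.iterate_succ_apply, Nat.succ_eq_add_one, Nat.sub_add_cancel hn, hper]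
  exact hpred ▸ reach_iterate_alternatingNext hVF hE hM hM' (hE _ (hM.1 h)).1 (n - 1)

theorem reach_of_oStep (hVfin : V.Finite) (hVF : Disjoint V F)
    (hE : ∀ e ∈ E, e.1 ∈ V ∧ e.2 ∈ F) (hM : IsPerfectMatching V F E M)
    (hM' : IsPerfectMatching V F E M') {x y : α} (hxy : OStep E M' x y) : Reach E M x y := by
  rcases hxy with ⟨hE_xy, hxy'⟩ | ⟨-, hyx'⟩
  · by_cases hxy : (x, y) ∈ M
    · obtain ⟨w, hwy'⟩ := hM'.exists_mem_right hVF hE (hE _ hE_xy).2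
      have hwy : (w, y) ∉ M := fun hwy => hxy' (hM.eq_of_mem_of_mem_right hE hxy hwy ▸ hwy')
      exact (reach_of_mem_of_mem hVfin hVF hE hM hM' hxy hwy').tail (Or.inl ⟨hM'.1 hwy', hwy⟩)
    · exact .single (Or.inl ⟨hE_xy, hxy⟩)
  · obtain ⟨v, hvx⟩ := hM.exists_mem_right hVF hE (hE _ (hM'.1 hyx')).2
    exact .head (Or.inr ⟨hM.1 hvx, hvx⟩) (reach_of_mem_of_mem hVfin hVF hE hM hM' hvx hyx')

theorem reach_iff (hVfin : V.Finite) (hVF : Disjoint V F) (hE : ∀ e ∈ E, e.1 ∈ V ∧ e.2 ∈ F)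
    (hM : IsPerfectMatching V F E M) (hM' : IsPerfectMatching V F E M') {x y : α} :
    Reach E M x y ↔ Reach E M' x y :=
  ⟨fun h => Relation.ReflTransGen.lift' id (fun _ _ => reach_of_oStep hVfin hVF hE hM' hM) _ _ h,
    fun h => Relation.ReflTransGen.lift' id (fun _ _ => reach_of_oStep hVfin hVF hE hM hM') _ _ h⟩

end

theorem mutual_reach_independent_of_matching_general {α : Type*}
    (V F : Set α) (hVfin : V.Finite)
    (hVF : Disjoint V F)
    (E : Set (α × α))
    (hE : ∀ e ∈ E, e.1 ∈ V ∧ e.2 ∈ F)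
    (M M' : Set (α × α))
    (hM : IsPerfectMatching V F E M) (hM' : IsPerfectMatching V F E M') :
    ∀ x ∈ V ∪ F, ∀ y ∈ V ∪ F,
      ((Reach E M x y ∧ Reach E M y x) ↔ (Reach E M' x y ∧ Reach E M' y x)) := by
  intro x _ y _
  rw [reach_iff hVfin hVF hE hM hM', reach_iff hVfin hVF hE hM hM']

/-- For any two perfect matchings `M` and `M'` of a bipartite graph `B`,
two vertices `x, y ∈ V ∪ F` are mutually reachable in `G(B, M)` if and only if they
are mutually reachable in `G(B, M')`: the segmentation of `V ∪ F` into strongly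
connected components does not depend on the choice of the perfect matching. -/
theorem mutual_reach_independent_of_matching {α : Type*}
    (V F : Set α) (hVfin : V.Finite) (hFfin : F.Finite)
    (hVF : Disjoint V F)
    (E : Set (α × α))
    (hE : ∀ e ∈ E, e.1 ∈ V ∧ e.2 ∈ F)
    (M M' : Set (α × α))
    (hM : IsPerfectMatching V F E M) (hM' : IsPerfectMatching V F E M') :
    ∀ x ∈ V ∪ F, ∀ y ∈ V ∪ F,
      ((Reach E M x y ∧ Reach E M y x) ↔ (Reach E M' x y ∧ Reach E M' y x)) :=
  mutual_reach_independent_of_matching_general V F hVfin hVF E hE M M' hM hM'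
end
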